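/- Let X ∈ ℝ^{d_in×n} and Y ∈ ℝ^{d_out×n}. Let P_X be the orthogonal projector of ℝ^n onto row(X), applied to each row of a matrix, and set Y_∥ := P_X Y and Y_⊥ := Y − Y_∥. Then for every r ∈ ℕ, E_id(r)² = ‖Y_⊥‖_F² + (s_{>r}(Y_∥))². -/

import Mathlib

open scoped BigOperators

namespace CoLA

noncomputable section

/-- Frobenius norm of a real matrix. -/
def frobNorm {m n : ℕ} (M : Matrix (Fin m) (Fin n) ℝ) : ℝ :=
  Real.sqrt (∑ i, ∑ j, (M i j) ^ 2)

/-- Entrywise application of `σ` to a matrix. -/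
def entrywise (σ : ℝ → ℝ) {m n : ℕ} (M : Matrix (Fin m) (Fin n) ℝ) :
    Matrix (Fin m) (Fin n) ℝ :=
  Matrix.of fun i j => σ (M i j)

/-- `E_σ(r)`. -/
def Esig (σ : ℝ → ℝ) {din dout n : ℕ} (X : Matrix (Fin din) (Fin n) ℝ)
    (Y : Matrix (Fin dout) (Fin n) ℝ) (r : ℕ) : ℝ :=
  ⨅ (A : Matrix (Fin r) (Fin din) ℝ), ⨅ (B : Matrix (Fin dout) (Fin r) ℝ),
    frobNorm (Y - B * entrywise σ (A * X))

/-- `E_id(r)`. -/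
def Eid {din dout n : ℕ} (X : Matrix (Fin din) (Fin n) ℝ)
    (Y : Matrix (Fin dout) (Fin n) ℝ) (r : ℕ) : ℝ :=
  ⨅ (A : Matrix (Fin r) (Fin din) ℝ), ⨅ (B : Matrix (Fin dout) (Fin r) ℝ),
    frobNorm (Y - B * A * X)

/-- The (unsorted) singular values of `M`: square roots of eigenvalues of `Mᴴ * M`. -/
def svAux {m n : ℕ} (M : Matrix (Fin m) (Fin n) ℝ) : Fin n → ℝ :=
  fun i => Real.sqrt ((show (M.transpose * M).IsHermitian by
    simpa using Matrix.isHermitian_conjTranspose_mul_self M).eigenvalues i)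

/-- Singular values of `M` sorted in non-increasing order (0-indexed). -/
def sv {m n : ℕ} (M : Matrix (Fin m) (Fin n) ℝ) : Fin n → ℝ :=
  fun i => svAux M (Tuple.sort (fun j => -(svAux M j)) i)

/-- `k`-th largest singular value (1-indexed, `0` for `k > n`). -/
def sVal {m n : ℕ} (M : Matrix (Fin m) (Fin n) ℝ) (k : ℕ) : ℝ :=
  if h : k - 1 < n then sv M ⟨k - 1, h⟩ else 0

/-- `s_{>k}(M) = √(∑_{j>k} s_j(M)²)` (with `j` 1-indexed). -/
def sGt {m n : ℕ} (M : Matrix (Fin m) (Fin n) ℝ) (k : ℕ) : ℝ :=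
  Real.sqrt (∑ j : Fin n, if k ≤ (j : ℕ) then (sv M j) ^ 2 else 0)

/-- Spectral (ℓ²-operator) norm of a real matrix. -/
def specNorm {m n : ℕ} (M : Matrix (Fin m) (Fin n) ℝ) : ℝ :=
  ‖LinearMap.toContinuousLinearMap (Matrix.toEuclideanLin M)‖

/-- Effective rank `r_α(M)`: the least `k` with `∑_{i≤k} s_i² ≥ α ∑_i s_i²`. -/
def effRank {m n : ℕ} (M : Matrix (Fin m) (Fin n) ℝ) (α : ℝ) : ℕ :=
  sInf {k : ℕ |
    α * ∑ i : Fin n, (sv M i) ^ 2 ≤ ∑ i : Fin n, if (i : ℕ) < k then (sv M i) ^ 2 else 0}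

/-- Row space of `X` inside `Fin n → ℝ`. -/
def rowSpace {d n : ℕ} (X : Matrix (Fin d) (Fin n) ℝ) : Submodule ℝ (Fin n → ℝ) :=
  Submodule.span ℝ (Set.range X)

/-- Row space of `X` as a submodule of Euclidean space. -/
def rowSpaceE {d n : ℕ} (X : Matrix (Fin d) (Fin n) ℝ) :
    Submodule ℝ (EuclideanSpace ℝ (Fin n)) :=
  Submodule.span ℝ (Set.range fun i => (WithLp.equiv 2 (Fin n → ℝ)).symm (X i))

/-- Row-wise orthogonal projection of the rows of `Y` onto the subspace `S`. -/
def projRows {dout n : ℕ} (S : Submodule ℝ (EuclideanSpace ℝ (Fin n)))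
    (Y : Matrix (Fin dout) (Fin n) ℝ) : Matrix (Fin dout) (Fin n) ℝ :=
  Matrix.of fun i => WithLp.equiv 2 (Fin n → ℝ)
    ((S.orthogonalProjectionOnto ((WithLp.equiv 2 (Fin n → ℝ)).symm (Y i)) :
      EuclideanSpace ℝ (Fin n)))

/-- Row-wise orthogonal projection onto the orthogonal complement of `span{v}`. -/
def projVperp {dout n : ℕ} (v : Fin n → ℝ) (Y : Matrix (Fin dout) (Fin n) ℝ) :
    Matrix (Fin dout) (Fin n) ℝ :=
  projRows (Submodule.span ℝ {(WithLp.equiv 2 (Fin n → ℝ)).symm v})ᗮ Y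


/-! Rows of `B * A * X` lie in `row(X)`, so Pythagoras splits `‖Y - B A X‖²` as
`‖Y_⊥‖² + ‖Y_∥ - B A X‖²`, and conversely every `r × n` matrix with rows in `row(X)` is of the
form `A X`. What remains is the Eckart–Young theorem for `Z = Y_∥`, with the extra requirement
that the optimal right factor has rows in `row(X)`.

Lower bound: the kernel `K` of `C` has dimension at least `n - r`, and for an orthonormal basis
`f` of `K`, `‖Z - B C‖² ≥ ∑ ‖(Z - B C) f_k‖² = ∑ ‖Z f_k‖² = ∑_t s_t² c_t`, where `c_t ∈ [0, 1]`
is the squared length of the projection of the `t`-th right singular vector onto `K`. Since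
`∑ c_t = dim K ≥ n - r` and the `s_t` decrease, this is at least `∑_{t ≥ r} s_t²`.

Upper bound: the truncated SVD `∑_{t < r} (Z v_t) v_tᵀ` has error exactly `∑_{t ≥ r} s_t²`, and
its right singular vectors with `s_t ≠ 0` are `s_t⁻² Zᵀ Z v_t ∈ row(Z) ⊆ row(X)`. -/

open scoped RealInnerProductSpace
open Matrix WithLp

section Rows

variable {m n : ℕ}

abbrev rowE (M : Matrix (Fin m) (Fin n) ℝ) (i : Fin m) : EuclideanSpace ℝ (Fin n) :=
  toLp 2 (M i)

theorem frobNorm_nonneg (M : Matrix (Fin m) (Fin n) ℝ) : 0 ≤ frobNorm M :=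
  Real.sqrt_nonneg _

theorem frobNorm_sq (M : Matrix (Fin m) (Fin n) ℝ) :
    frobNorm M ^ 2 = ∑ i, ‖rowE M i‖ ^ 2 := by
  rw [frobNorm, Real.sq_sqrt (by positivity)]
  simp [EuclideanSpace.norm_sq_eq]

theorem inner_rowE (M : Matrix (Fin m) (Fin n) ℝ) (x : EuclideanSpace ℝ (Fin n))
    (i : Fin m) : ⟪rowE M i, x⟫ = toEuclideanLin M x i := by
  simp [PiLp.inner_apply, toLpLin_apply, mulVec, dotProduct, mul_comm]

theorem sum_norm_sq_toEuclideanLin {ι : Type*} [Fintype ι] (M : Matrix (Fin m) (Fin n) ℝ)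
    (f : ι → EuclideanSpace ℝ (Fin n)) :
    ∑ k, ‖toEuclideanLin M (f k)‖ ^ 2 = ∑ i, ∑ k, ⟪f k, rowE M i⟫ ^ 2 := by
  simp_rw [EuclideanSpace.norm_sq_eq, real_inner_comm (rowE M _), inner_rowE,
    Real.norm_eq_abs, sq_abs]
  exact Finset.sum_comm

theorem sum_norm_sq_toEuclideanLin_le_frobNorm_sq {ι : Type*} [Fintype ι]
    (M : Matrix (Fin m) (Fin n) ℝ) {f : ι → EuclideanSpace ℝ (Fin n)} (hf : Orthonormal ℝ f) :
    ∑ k, ‖toEuclideanLin M (f k)‖ ^ 2 ≤ frobNorm M ^ 2 := by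
  rw [sum_norm_sq_toEuclideanLin, frobNorm_sq]
  gcongr with i
  simpa using hf.sum_inner_products_le (s := Finset.univ) (rowE M i)

theorem frobNorm_sq_eq_sum_norm_sq_toEuclideanLin {ι : Type*} [Fintype ι]
    (M : Matrix (Fin m) (Fin n) ℝ) (b : OrthonormalBasis ι ℝ (EuclideanSpace ℝ (Fin n))) :
    frobNorm M ^ 2 = ∑ k, ‖toEuclideanLin M (b k)‖ ^ 2 := by
  rw [sum_norm_sq_toEuclideanLin, frobNorm_sq]
  refine Finset.sum_congr rfl fun i _ => ?_
  simpa using (b.sum_sq_norm_inner_right (rowE M i)).symm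

theorem toEuclideanLin_transpose_of_mul_of_apply {p : ℕ} (b : Fin p → EuclideanSpace ℝ (Fin m))
    (c : Fin p → EuclideanSpace ℝ (Fin n))
    (x : EuclideanSpace ℝ (Fin n)) :
    toEuclideanLin ((of fun t => ofLp (b t))ᵀ * of fun t => ofLp (c t)) x =
      ∑ t, ⟪c t, x⟫ • b t := by
  ext i
  simp [toLpLin_apply, mulVec, dotProduct, PiLp.inner_apply, Finset.sum_apply, mul_apply,
    Finset.mul_sum, mul_comm, mul_left_comm]
  exact Finset.sum_comm

end Rows

section RowsInSubspace

variable {m n p : ℕ} {S : Submodule ℝ (EuclideanSpace ℝ (Fin n))}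

theorem toLp_vecMul_mem {M : Matrix (Fin p) (Fin n) ℝ} (hM : ∀ k, rowE M k ∈ S)
    (w : Fin p → ℝ) : toLp 2 (w ᵥ* M) ∈ S := by
  rw [vecMul_eq_sum, toLp_sum]
  exact S.sum_mem fun k _ => by rw [toLp_smul]; exact S.smul_mem _ (hM k)

theorem rowE_mul_mem (A : Matrix (Fin m) (Fin p) ℝ) {M : Matrix (Fin p) (Fin n) ℝ}
    (hM : ∀ k, rowE M k ∈ S) (i : Fin m) : rowE (A * M) i ∈ S := by
  rw [rowE, mul_apply_eq_vecMul]
  exact toLp_vecMul_mem hM _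

theorem rowE_projRows_mem (S : Submodule ℝ (EuclideanSpace ℝ (Fin n)))
    (Y : Matrix (Fin m) (Fin n) ℝ) (i : Fin m) : rowE (projRows S Y) i ∈ S :=
  (S.orthogonalProjectionOnto _).2

theorem exists_eq_mul_of_rowE_mem_rowSpaceE {d : ℕ} {X : Matrix (Fin d) (Fin n) ℝ}
    {C : Matrix (Fin p) (Fin n) ℝ} (hC : ∀ k, rowE C k ∈ rowSpaceE X) :
    ∃ A : Matrix (Fin p) (Fin d) ℝ, C = A * X := by
  choose A hA using fun k => (Submodule.mem_span_range_iff_exists_fun ℝ).mp (hC k)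
  refine ⟨of A, ?_⟩
  ext k j
  have := congrArg (fun v : EuclideanSpace ℝ (Fin n) => v j) (hA k)
  simpa [mul_apply, Finset.sum_apply] using this.symm

theorem frobNorm_sq_sub_eq_of_rowE_mem (S : Submodule ℝ (EuclideanSpace ℝ (Fin n)))
    (Y M : Matrix (Fin m) (Fin n) ℝ) (hM : ∀ i, rowE M i ∈ S) :
    frobNorm (Y - M) ^ 2 =
      frobNorm (Y - projRows S Y) ^ 2 + frobNorm (projRows S Y - M) ^ 2 := by
  simp only [frobNorm_sq, ← Finset.sum_add_distrib]
  refine Finset.sum_congr rfl fun i _ => ?_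
  have hP : rowE (projRows S Y) i = S.starProjection (rowE Y i) := rfl
  have horth : ⟪rowE Y i - S.starProjection (rowE Y i),
      S.starProjection (rowE Y i) - rowE M i⟫ = 0 :=
    S.inner_left_of_mem_orthogonal (S.sub_mem (S.starProjection_apply_mem _) (hM i))
      (S.sub_starProjection_mem_orthogonal _)
  have hsub : ∀ A B : Matrix (Fin m) (Fin n) ℝ, rowE (A - B) i = rowE A i - rowE B i :=
    fun _ _ => rfl
  rw [hsub, hsub, hsub, hP,
    ← sub_add_sub_cancel (rowE Y i) (S.starProjection (rowE Y i)) (rowE M i),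
    sq, sq, sq, norm_add_sq_eq_norm_sq_add_norm_sq_real horth]

end RowsInSubspace

section Spectral

variable {m n : ℕ} (Z : Matrix (Fin m) (Fin n) ℝ)

theorem isHermitian_transpose_mul_self : (Zᵀ * Z).IsHermitian := by
  simpa using isHermitian_conjTranspose_mul_self Z

def svPerm : Equiv.Perm (Fin n) :=
  Tuple.sort fun j => -svAux Z j

def rightSingularBasis : OrthonormalBasis (Fin n) ℝ (EuclideanSpace ℝ (Fin n)) :=
  (isHermitian_transpose_mul_self Z).eigenvectorBasis.reindex (svPerm Z).symm

theorem sv_antitone : Antitone (sv Z) := fun _ _ hab =>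
  neg_le_neg_iff.mp (Tuple.monotone_sort (fun j => -svAux Z j) hab)

theorem sv_nonneg (t : Fin n) : 0 ≤ sv Z t :=
  Real.sqrt_nonneg _

theorem sv_sq (t : Fin n) :
    sv Z t ^ 2 = (isHermitian_transpose_mul_self Z).eigenvalues (svPerm Z t) :=
  Real.sq_sqrt ((posSemidef_conjTranspose_mul_self Z).eigenvalues_nonneg _)

theorem toEuclideanLin_transpose_mul_self_rightSingularBasis (t : Fin n) :
    toEuclideanLin (Zᵀ * Z) (rightSingularBasis Z t) = sv Z t ^ 2 • rightSingularBasis Z t := by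
  rw [sv_sq, rightSingularBasis, OrthonormalBasis.reindex_apply, Equiv.symm_symm, toLpLin_apply,
    (isHermitian_transpose_mul_self Z).mulVec_eigenvectorBasis]
  rfl

theorem norm_toEuclideanLin_sq_eq_inner (x : EuclideanSpace ℝ (Fin n)) :
    ‖toEuclideanLin Z x‖ ^ 2 = ⟪x, toEuclideanLin (Zᵀ * Z) x⟫ := by
  rw [← real_inner_self_eq_norm_sq, ← conjTranspose_eq_transpose_of_trivial, toLpLin_mul_same,
    toEuclideanLin_conjTranspose_eq_adjoint, LinearMap.comp_apply, LinearMap.adjoint_inner_right]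

theorem norm_toEuclideanLin_rightSingularBasis (t : Fin n) :
    ‖toEuclideanLin Z (rightSingularBasis Z t)‖ = sv Z t := by
  rw [← sq_eq_sq₀ (norm_nonneg _) (sv_nonneg Z t), norm_toEuclideanLin_sq_eq_inner,
    toEuclideanLin_transpose_mul_self_rightSingularBasis, real_inner_smul_right,
    real_inner_self_eq_norm_sq, (rightSingularBasis Z).orthonormal.1 t, one_pow, mul_one]

theorem norm_toEuclideanLin_sq (x : EuclideanSpace ℝ (Fin n)) :
    ‖toEuclideanLin Z x‖ ^ 2 = ∑ t, sv Z t ^ 2 * ⟪rightSingularBasis Z t, x⟫ ^ 2 := by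
  rw [norm_toEuclideanLin_sq_eq_inner,
    ← (rightSingularBasis Z).sum_inner_mul_inner x (toEuclideanLin (Zᵀ * Z) x)]
  refine Finset.sum_congr rfl fun t _ => ?_
  have hsymm := isSymmetric_toEuclideanLin_iff.mpr (isHermitian_transpose_mul_self Z)
  rw [← hsymm, toEuclideanLin_transpose_mul_self_rightSingularBasis, real_inner_smul_left,
    real_inner_comm x]
  ring

theorem rightSingularBasis_mem {S : Submodule ℝ (EuclideanSpace ℝ (Fin n))}
    (hZ : ∀ i, rowE Z i ∈ S) {t : Fin n} (ht : sv Z t ≠ 0) : rightSingularBasis Z t ∈ S := by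
  have hv := toEuclideanLin_transpose_mul_self_rightSingularBasis Z t
  rw [← inv_smul_smul₀ (pow_ne_zero 2 ht) (rightSingularBasis Z t), ← hv]
  refine S.smul_mem _ ?_
  rw [toLpLin_apply, ← mulVec_mulVec, mulVec_transpose]
  exact toLp_vecMul_mem hZ _

end Spectral

section EckartYoung

variable {m n r : ℕ}

theorem sum_ite_le_sum_mul {μ c : Fin n → ℝ} (hμ : Antitone μ) (hμ0 : ∀ j, 0 ≤ μ j)
    (hc0 : ∀ j, 0 ≤ c j) (hc1 : ∀ j, c j ≤ 1) (hc : (n : ℝ) - r ≤ ∑ j, c j) :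
    ∑ j : Fin n, (if r ≤ (j : ℕ) then μ j else 0) ≤ ∑ j, μ j * c j := by
  rcases lt_or_ge r n with hr | hr
  · -- compare both sides with the threshold `μ r`, termwise
    set τ := μ ⟨r, hr⟩
    have hterm : ∀ j : Fin n, τ * (c j - if r ≤ (j : ℕ) then 1 else 0) ≤
        μ j * c j - if r ≤ (j : ℕ) then μ j else 0 := by
      intro j
      split_ifs with h
      · nlinarith [hμ (show (⟨r, hr⟩ : Fin n) ≤ j from h), hc1 j]
      · have hj : j ≤ ⟨r, hr⟩ := Fin.le_def.mpr (by simp only; omega)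
        nlinarith [hμ hj, hc0 j]
    have hcount : ∑ j : Fin n, (if r ≤ (j : ℕ) then (1 : ℝ) else 0) = n - r := by
      have hsplit := Finset.card_filter_add_card_filter_not (s := Finset.univ)
        fun j : Fin n => (j : ℕ) < r
      simp only [not_lt, Finset.card_univ, Fintype.card_fin, Fin.card_filter_val_lt] at hsplit
      rw [Finset.sum_boole, ← Nat.cast_sub hr.le]
      congr 1
      omega
    have := Finset.sum_le_sum fun j (_ : j ∈ Finset.univ) => hterm j
    rw [← Finset.mul_sum, Finset.sum_sub_distrib, Finset.sum_sub_distrib, hcount] at this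
    nlinarith [hμ0 ⟨r, hr⟩, mul_nonneg (hμ0 ⟨r, hr⟩) (sub_nonneg.mpr hc)]
  · rw [Finset.sum_eq_zero fun j _ => if_neg (by have := j.isLt; omega)]
    exact Finset.sum_nonneg fun j _ => mul_nonneg (hμ0 j) (hc0 j)

theorem sGt_sq (Z : Matrix (Fin m) (Fin n) ℝ) (r : ℕ) :
    sGt Z r ^ 2 = ∑ t : Fin n, if r ≤ (t : ℕ) then sv Z t ^ 2 else 0 :=
  Real.sq_sqrt (Finset.sum_nonneg fun _ _ => by split_ifs <;> positivity)

theorem sGt_sq_le_frobNorm_sq_sub_mul (Z : Matrix (Fin m) (Fin n) ℝ)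
    (B : Matrix (Fin m) (Fin r) ℝ) (C : Matrix (Fin r) (Fin n) ℝ) :
    sGt Z r ^ 2 ≤ frobNorm (Z - B * C) ^ 2 := by
  set v := rightSingularBasis Z
  set K := LinearMap.ker (toEuclideanLin C)
  set f : Fin (Module.finrank ℝ K) → EuclideanSpace ℝ (Fin n) :=
    fun k => stdOrthonormalBasis ℝ K k
  have hf : Orthonormal ℝ f :=
    (stdOrthonormalBasis ℝ K).orthonormal.comp_linearIsometry K.subtypeₗᵢ
  have hCf : ∀ k, toEuclideanLin C (f k) = 0 := fun k => (stdOrthonormalBasis ℝ K k).2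
  have hdim : n ≤ r + Module.finrank ℝ K := by
    have hsum :
        Module.finrank ℝ (LinearMap.range (toEuclideanLin C)) + Module.finrank ℝ K = n := by
      simpa using LinearMap.finrank_range_add_finrank_ker (toEuclideanLin C)
    have hrange : Module.finrank ℝ (LinearMap.range (toEuclideanLin C)) ≤ r := by
      simpa using Submodule.finrank_le (LinearMap.range (toEuclideanLin C))
    omega
  set c : Fin n → ℝ := fun t => ∑ k, ⟪v t, f k⟫ ^ 2
  have hc1 : ∀ t, c t ≤ 1 := fun t => by
    simpa [c, real_inner_comm (v t), v.orthonormal.1 t] using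
      hf.sum_inner_products_le (s := Finset.univ) (v t)
  have hc : ∑ t, c t = Module.finrank ℝ K := by
    have hunit : ∀ k, ∑ t, ⟪v t, f k⟫ ^ 2 = 1 := fun k => by
      simpa [hf.1 k] using v.sum_sq_norm_inner_right (f k)
    simp only [c]
    rw [Finset.sum_comm]
    simp [hunit]
  calc sGt Z r ^ 2 = ∑ t : Fin n, if r ≤ (t : ℕ) then sv Z t ^ 2 else 0 := sGt_sq Z r
    _ ≤ ∑ t, sv Z t ^ 2 * c t :=
        sum_ite_le_sum_mul (fun a b hab => pow_le_pow_left₀ (sv_nonneg Z b) (sv_antitone Z hab) 2)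
          (fun t => sq_nonneg _) (fun t => Finset.sum_nonneg fun k _ => sq_nonneg _) hc1
          (by rw [hc, sub_le_iff_le_add']; exact_mod_cast hdim)
    _ = ∑ k, ‖toEuclideanLin Z (f k)‖ ^ 2 := by
        simp_rw [norm_toEuclideanLin_sq, c, Finset.mul_sum]
        exact Finset.sum_comm
    _ = ∑ k, ‖toEuclideanLin (Z - B * C) (f k)‖ ^ 2 := by
        simp [toLpLin_mul_same, hCf]
    _ ≤ frobNorm (Z - B * C) ^ 2 := sum_norm_sq_toEuclideanLin_le_frobNorm_sq _ hf

end EckartYoung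

section Truncation

variable {m n r : ℕ}

theorem exists_mul_eq_of_col_eq_zero {R : Type*} [Semiring R] (M : Matrix (Fin m) (Fin n) R)
    (hM : ∀ i (t : Fin n), r ≤ (t : ℕ) → M i t = 0) :
    ∃ (B : Matrix (Fin m) (Fin r) R) (E : Matrix (Fin r) (Fin n) R), B * E = M := by
  refine ⟨of fun i k => if hk : (k : ℕ) < n then M i ⟨k, hk⟩ else 0,
    of fun k t => if (k : ℕ) = t then 1 else 0, ?_⟩
  ext i t
  simp only [mul_apply, of_apply, mul_ite, mul_one, mul_zero]
  by_cases ht : (t : ℕ) < r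
  · rw [Finset.sum_eq_single ⟨t, ht⟩ (fun k _ hk => if_neg fun h => hk (Fin.ext h))
      (by simp)]
    simp
  · rw [hM i t (not_lt.mp ht)]
    exact Finset.sum_eq_zero fun k _ => if_neg (by have := k.isLt; omega)

theorem exists_frobNorm_sq_sub_mul_eq_sGt_sq {S : Submodule ℝ (EuclideanSpace ℝ (Fin n))}
    {Z : Matrix (Fin m) (Fin n) ℝ} (hZ : ∀ i, rowE Z i ∈ S) (r : ℕ) :
    ∃ (B : Matrix (Fin m) (Fin r) ℝ) (C : Matrix (Fin r) (Fin n) ℝ),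
      (∀ k, rowE C k ∈ S) ∧ frobNorm (Z - B * C) ^ 2 = sGt Z r ^ 2 := by
  set v := rightSingularBasis Z
  -- the singular vectors with `sv Z t = 0` need not lie in `S`, but they are killed by `Z`
  set u : Fin n → EuclideanSpace ℝ (Fin n) := fun t => if sv Z t = 0 then 0 else v t
  set b : Fin n → EuclideanSpace ℝ (Fin m) := fun t =>
    if (t : ℕ) < r then toEuclideanLin Z (v t) else 0
  have hu : ∀ t, rowE (of fun t => ofLp (u t)) t ∈ S := fun t => by
    change u t ∈ S
    by_cases ht : sv Z t = 0
    · simp [u, ht]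
    · simpa [u, ht] using rightSingularBasis_mem Z hZ ht
  have hub : ∀ t s, ⟪u t, v s⟫ • b t = if t = s then b s else 0 := fun t s => by
    by_cases ht : sv Z t = 0
    · have : toEuclideanLin Z (v t) = 0 := by
        rw [← norm_eq_zero, norm_toEuclideanLin_rightSingularBasis, ht]
      split_ifs with h <;> simp_all [u, b]
    · obtain rfl | hts := eq_or_ne t s <;>
        simp [u, orthonormal_iff_ite.mp v.orthonormal, *]
  obtain ⟨B, E, hBE⟩ := exists_mul_eq_of_col_eq_zero (r := r) (of fun t => ofLp (b t))ᵀ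
    fun i t ht => by simp [b, not_lt.mpr ht]
  refine ⟨B, E * of fun t => ofLp (u t), rowE_mul_mem E hu, ?_⟩
  rw [← Matrix.mul_assoc, hBE, frobNorm_sq_eq_sum_norm_sq_toEuclideanLin _ v, sGt_sq]
  refine Finset.sum_congr rfl fun s _ => ?_
  rw [map_sub, LinearMap.sub_apply, toEuclideanLin_transpose_of_mul_of_apply,
    Finset.sum_congr rfl fun t _ => hub t s, Finset.sum_ite_eq' Finset.univ s,
    if_pos (Finset.mem_univ s)]
  by_cases hs : (s : ℕ) < r
  · simp [b, hs, not_le.mpr hs]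
  · simp [b, hs, not_lt.mp hs, v, norm_toEuclideanLin_rightSingularBasis]

end Truncation

theorem iInf_iInf_eq_of_forall_le_of_exists_le {α β : Type*} [Nonempty α] [Nonempty β]
    {f : α → β → ℝ} {c : ℝ} (hlow : ∀ a b, c ≤ f a b) (hatt : ∃ a b, f a b ≤ c) :
    ⨅ a, ⨅ b, f a b = c := by
  obtain ⟨a, b, hab⟩ := hatt
  refine le_antisymm ?_ (le_ciInf fun a => le_ciInf fun b => hlow a b)
  refine ciInf_le_of_le ⟨c, ?_⟩ a (ciInf_le_of_le ⟨c, ?_⟩ b hab)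
  · rintro _ ⟨a', rfl⟩
    exact le_ciInf fun b' => hlow a' b'
  · rintro _ ⟨b', rfl⟩
    exact hlow a b'

/-- `E_id(r)² = ‖Y_⊥‖_F² + s_{>r}(Y_∥)²`, where `Y_∥` is the
row-wise orthogonal projection of `Y` onto `row(X)` and `Y_⊥ = Y − Y_∥`. -/
theorem stmt11 {din dout n : ℕ} (X : Matrix (Fin din) (Fin n) ℝ)
    (Y : Matrix (Fin dout) (Fin n) ℝ) (r : ℕ) :
    (Eid X Y r) ^ 2 =
      frobNorm (Y - projRows (rowSpaceE X) Y) ^ 2 +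
        (sGt (projRows (rowSpaceE X) Y) r) ^ 2 := by
  set S := rowSpaceE X
  set Z := projRows S Y
  have hX : ∀ l, rowE X l ∈ S := fun l => Submodule.subset_span ⟨l, rfl⟩
  have hsplit : ∀ (A : Matrix (Fin r) (Fin din) ℝ) (B : Matrix (Fin dout) (Fin r) ℝ),
      frobNorm (Y - B * A * X) ^ 2 = frobNorm (Y - Z) ^ 2 + frobNorm (Z - B * (A * X)) ^ 2 :=
    fun A B => by
      rw [Matrix.mul_assoc]
      exact frobNorm_sq_sub_eq_of_rowE_mem S Y _ (rowE_mul_mem B (rowE_mul_mem A hX))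
  suffices Eid X Y r = √(frobNorm (Y - Z) ^ 2 + sGt Z r ^ 2) by
    rw [this, Real.sq_sqrt (by positivity)]
  refine iInf_iInf_eq_of_forall_le_of_exists_le (fun A B => ?_) ?_
  · rw [Real.sqrt_le_left (frobNorm_nonneg _), hsplit]
    grw [← sGt_sq_le_frobNorm_sq_sub_mul Z B (A * X)]
  · obtain ⟨B, C, hC, hBC⟩ := exists_frobNorm_sq_sub_mul_eq_sGt_sq (rowE_projRows_mem S Y) r
    obtain ⟨A, rfl⟩ := exists_eq_mul_of_rowE_mem_rowSpaceE hC
    exact ⟨A, B, by rw [← Real.sqrt_sq (frobNorm_nonneg _), hsplit, hBC]⟩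

end

end CoLA
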